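/- arXiv:2201.06062 — 3 statements merged into one kernel-verified Lean document; each statement's English description precedes it below -/
import Mathlib

section
/- Let n ≥ 1, let v_1, …, v_m ∈ ℝ^n be vectors, and let w_1, …, w_m > 0 be positive real weights. Suppose that (i) for every nonzero proper ℝ-linear subspace W ⊊ ℝ^{n+1} one has (1/dim_ℝ W) · Σ_{k : (v_k, −1) ∈ W} w_k ≤ (1/(n+1)) · Σ_{k=1}^m w_k, and (ii) whenever equality holds in (i) for some W, there exists an ℝ-linear subspace W′ ⊊ ℝ^{n+1} complementary to W (i.e. W ∩ W′ = 0 and W + W′ = ℝ^{n+1}) for which equality also holds. Then, whenever (1/(dim A + 1)) · Σ_{k : v_k ∈ A} w_k = (1/(n+1)) · Σ_{k=1}^m w_k for some proper affine subspace A ⊊ ℝ^n, there exists a proper affine subspace A′ ⊊ ℝ^n complementary to A with (1/(dim A′ + 1)) · Σ_{k : v_k ∈ A′} w_k = (1/(n+1)) · Σ_{k=1}^m w_k. -/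
open MeasureTheory Module
open scoped RealInnerProductSpace

noncomputable section

/-- `ℝ^n` with the standard Euclidean structure. -/
abbrev Euc (n : ℕ) : Type := EuclideanSpace ℝ (Fin n)

/-- A point of `ℝ^n` is a lattice point if all of its coordinates are integers. -/
def IsLatticePt {n : ℕ} (x : Euc n) : Prop := ∀ i, ∃ z : ℤ, x i = (z : ℝ)

/-- A vector of `ℤ^n` is primitive if it is nonzero and is not a positive integer multiple
`c • w` (with `c ≠ 1`) of a lattice vector `w`. -/
def IsPrimitiveVec {n : ℕ} (v : Euc n) : Prop :=
  IsLatticePt v ∧ v ≠ 0 ∧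
    ∀ (c : ℕ) (w : Euc n), IsLatticePt w → v = (c : ℝ) • w → c = 1

/-- A family of `n` lattice vectors is a `ℤ`-basis of `ℤ^n`. -/
def IsZBasis {n : ℕ} (d : Fin n → Euc n) : Prop :=
  (∀ i, IsLatticePt (d i)) ∧ LinearIndependent ℝ d ∧
    ∀ x : Euc n, IsLatticePt x → ∃ a : Fin n → ℤ, x = ∑ i, (a i : ℝ) • d i

/-- An edge of a polytope `P`: a nonempty exposed face whose affine span has dimension `1`. -/
def IsEdgeOf {n : ℕ} (P E : Set (Euc n)) : Prop :=
  IsExposed ℝ P E ∧ E.Nonempty ∧ Module.finrank ℝ (affineSpan ℝ E).direction = 1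

/-- A full-dimensional lattice polytope `P ⊆ ℝ^n`, together with its `m` facets
`facet 1, …, facet m`, their primitive inner normals `v k` and the integers `c k`,
so that `P = {x | ∀ k, ⟪x, v k⟫ ≥ -c k}` and `facet k = {x ∈ P | ⟪x, v k⟫ = -c k}`
is `(n-1)`-dimensional (hence the `facet k` are precisely the facets of `P`). -/
structure LatticePolytope (n m : ℕ) where
  P : Set (Euc n)
  facet : Fin m → Set (Euc n)
  v : Fin m → Euc n
  c : Fin m → ℤ
  isPolytope : ∃ S : Finset (Euc n), (∀ x ∈ S, IsLatticePt x) ∧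
    P = convexHull ℝ (S : Set (Euc n))
  fullDim : (interior P).Nonempty
  v_primitive : ∀ k, IsPrimitiveVec (v k)
  v_injective : Function.Injective v
  halfspaces : P = {x : Euc n | ∀ k, -(c k : ℝ) ≤ ⟪x, v k⟫}
  facet_def : ∀ k, facet k = {x ∈ P | ⟪x, v k⟫ = -(c k : ℝ)}
  facet_dim : ∀ k, Module.finrank ℝ (affineSpan ℝ (facet k)).direction = n - 1

namespace LatticePolytope

variable {n m : ℕ}

/-- A lattice polytope is reflexive if all the `c k` equal `1`. -/
def Reflexive (Q : LatticePolytope n m) : Prop := ∀ k, Q.c k = 1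

/-- A lattice polytope is smooth if at every vertex (extreme point) `u`, the primitive
direction vectors of the edges of `P` emanating from `u` form a `ℤ`-basis of `ℤ^n`. -/
def Smooth (Q : LatticePolytope n m) : Prop :=
  ∀ u ∈ Set.extremePoints ℝ Q.P, ∃ d : Fin n → Euc n,
    IsZBasis d ∧ (∀ i, IsPrimitiveVec (d i)) ∧
    (∀ i, ∃ E : Set (Euc n), IsEdgeOf Q.P E ∧ u ∈ E ∧ ∃ t : ℝ, 0 < t ∧ u + t • d i ∈ E) ∧
    (∀ E : Set (Euc n), IsEdgeOf Q.P E → u ∈ E →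
      ∃ i, (affineSpan ℝ E).direction = Submodule.span ℝ {d i})

/-- The barycenter of the polytope is at the origin: `∫_P x dx = 0`. -/
def Centered (Q : LatticePolytope n m) : Prop := ∫ x in Q.P, x = (0 : Euc n)

/-- The lattice volume of the facet `facet k`: its `(n-1)`-dimensional Hausdorff measure
divided by the Euclidean norm of the primitive normal `v k`. -/
def facetVol (Q : LatticePolytope n m) (k : Fin m) : ℝ :=
  (μH[(n : ℝ) - 1] (Q.facet k)).toReal / ‖Q.v k‖

/-- `ℓ` is the lattice length of the facet (side) `facet k`: its one-dimensional Hausdorff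
measure divided by the Euclidean norm of a primitive direction vector of the side. -/
def IsLatticeLength (Q : LatticePolytope n m) (k : Fin m) (ℓ : ℝ) : Prop :=
  ∃ d : Euc n, IsPrimitiveVec d ∧ d ∈ (affineSpan ℝ (Q.facet k)).direction ∧
    ℓ = (μH[(1 : ℝ)] (Q.facet k)).toReal / ‖d‖

end LatticePolytope

open Classical in
/-- The sum of the weights `w k` over all indices `k` satisfying the predicate `p`. -/
def wsum {m : ℕ} (w : Fin m → ℝ) (p : Fin m → Prop) : ℝ :=
  ∑ k ∈ Finset.univ.filter p, w k

/-- The embedding `v ↦ (v, -1)` of `ℝ^n` into `ℝ^(n+1)`. -/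
def snocNegOne {n : ℕ} (v : Euc n) : Euc (n + 1) :=
  (EuclideanSpace.equiv (Fin (n + 1)) ℝ).symm
    (Fin.snoc (EuclideanSpace.equiv (Fin n) ℝ v) (-1))

/-- The standard inclusion `ℝ^N ⊆ ℂ^N`, sending a real vector to the complex vector with
the same (real) coordinates. -/
def complexify {N : ℕ} (x : EuclideanSpace ℝ (Fin N)) : EuclideanSpace ℂ (Fin N) :=
  (EuclideanSpace.equiv (Fin N) ℂ).symm fun i => ((EuclideanSpace.equiv (Fin N) ℝ) x i : ℂ)

/-!
The lift `x ↦ (x, -1)` identifies nonempty affine subspaces `A ⊆ ℝ^n` with the linear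
subspaces of `ℝ^(n+1)` not contained in the hyperplane `H = {y | y_(n+1) = 0}`: `A` corresponds
to the span `W` of its lift, `dim W = dim A + 1`, and `A` is recovered as the set of points whose
lift lies in `W`. Hence the affine and linear concentration ratios agree, an affine equality
case is a linear one, and the complementary linear equality case `W'` is the lift of the
required `A'`, unless `W' ⊆ H`. In that case `W'` contains no lifted point, so the total weight
is zero and any complement of `W` will do; a shear `y ↦ y + f(y) p` with `p ∈ W` turns `W'` into
a complement of `W` that is not contained in `H`.
-/

section Complement

variable {R V : Type*} [Ring R] [AddCommGroup V] [Module R V]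

theorem IsCompl.map_of_sub_mem {W W' : Submodule R V} (h : IsCompl W W') (g : V →ₗ[R] V)
    (hg : ∀ x, g x - x ∈ W) : IsCompl W (W'.map g) := by
  constructor
  · rw [Submodule.disjoint_def]
    rintro _ hx ⟨c, hc, rfl⟩
    have hcW : c ∈ W := by simpa using W.sub_mem hx (hg c)
    rw [Submodule.disjoint_def.1 h.disjoint c hcW hc, map_zero]
  · rw [codisjoint_iff, eq_top_iff]
    intro x _
    obtain ⟨u, hu, c, hc, rfl⟩ :=
      Submodule.mem_sup.1 (h.sup_eq_top ▸ Submodule.mem_top : x ∈ W ⊔ W')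
    have : u + c = (u - (g c - c)) + g c := by abel
    rw [this]
    exact Submodule.add_mem_sup (W.sub_mem hu (hg c)) (Submodule.mem_map_of_mem hc)

end Complement

section Field

variable {K V : Type*} [Field K] [AddCommGroup V] [Module K V]

theorem IsCompl.exists_isCompl_exists_apply_ne_zero {W W' : Submodule K V} (h : IsCompl W W')
    (hW : W ≠ ⊤) (φ : V →ₗ[K] K) {p : V} (hp : p ∈ W) (hφp : φ p ≠ 0) :
    ∃ U : Submodule K V, IsCompl W U ∧ ∃ q ∈ U, φ q ≠ 0 := by
  obtain ⟨c, hc, hc0⟩ := Submodule.exists_mem_ne_zero_of_ne_bot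
    fun h' : W' = ⊥ => hW (eq_top_of_isCompl_bot (h' ▸ h))
  by_cases hφc : φ c = 0
  · obtain ⟨f, hf⟩ := Projective.exists_dual_eq_one K hc0
    refine ⟨W'.map (LinearMap.id + f.smulRight p), h.map_of_sub_mem _ fun x => ?_,
      _, Submodule.mem_map_of_mem hc, ?_⟩
    · simpa using W.smul_mem (f x) hp
    · simpa [hφc, hf] using hφp
  · exact ⟨W', h, c, hc, hφc⟩

namespace AffineSubspace

theorem span_coe_eq_direction_sup {S : AffineSubspace K V} {p : V} (hp : p ∈ S) :
    Submodule.span K (S : Set V) = S.direction ⊔ K ∙ p := by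
  apply le_antisymm
  · rw [Submodule.span_le]
    intro x hx
    rw [← sub_add_cancel x p]
    exact Submodule.add_mem_sup (S.vsub_mem_direction hx hp) (Submodule.mem_span_singleton_self p)
  · refine sup_le (fun d hd => ?_)
      ((Submodule.span_singleton_le_iff_mem _ _).2 (Submodule.subset_span hp))
    rw [← add_sub_cancel_right d p]
    exact Submodule.sub_mem _ (Submodule.subset_span (S.vadd_mem_of_mem_direction hd hp))
      (Submodule.subset_span hp)

variable {φ : V →ₗ[K] K} {c : K} {S : AffineSubspace K V}

theorem direction_le_ker_of_subset_preimage (hS : (S : Set V) ⊆ φ ⁻¹' {c}) :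
    S.direction ≤ LinearMap.ker φ := by
  rw [direction_eq_vectorSpan, vectorSpan_def, Submodule.span_le]
  rintro _ ⟨x, hx, y, hy, rfl⟩
  have hφx : φ x = c := hS hx
  have hφy : φ y = c := hS hy
  simp [hφx, hφy]

theorem finrank_span_coe_of_subset_preimage [FiniteDimensional K V]
    (hS : (S : Set V) ⊆ φ ⁻¹' {c}) (hc : c ≠ 0) {p : V} (hp : p ∈ S) :
    finrank K (Submodule.span K (S : Set V)) = finrank K S.direction + 1 := by
  have hφp : φ p = c := hS hp
  have hdisj : S.direction ⊓ K ∙ p = ⊥ := by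
    rw [eq_bot_iff]
    rintro _ ⟨hd, hdp⟩
    obtain ⟨t, rfl⟩ := Submodule.mem_span_singleton.1 hdp
    have : t * c = 0 := by simpa [hφp] using direction_le_ker_of_subset_preimage hS hd
    simp [(mul_eq_zero.1 this).resolve_right hc]
  have hp0 : p ≠ 0 := by rintro rfl; exact hc (by simpa using hφp.symm)
  have := Submodule.finrank_sup_add_finrank_inf_eq S.direction (K ∙ p)
  rw [hdisj, finrank_bot, finrank_span_singleton hp0, ← span_coe_eq_direction_sup hp] at this
  omega

theorem mem_of_mem_span_of_subset_preimage (hS : (S : Set V) ⊆ φ ⁻¹' {c}) (hc : c ≠ 0)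
    {p : V} (hp : p ∈ S) {x : V} (hx : x ∈ Submodule.span K (S : Set V)) (hφx : φ x = c) :
    x ∈ S := by
  rw [span_coe_eq_direction_sup hp] at hx
  obtain ⟨d, hd, _, htp, rfl⟩ := Submodule.mem_sup.1 hx
  obtain ⟨t, rfl⟩ := Submodule.mem_span_singleton.1 htp
  have hφp : φ p = c := hS hp
  obtain rfl : t = 1 := by
    have hφd : φ d = 0 := direction_le_ker_of_subset_preimage hS hd
    simp only [map_add, map_smul, hφd, hφp, smul_eq_mul, zero_add] at hφx
    exact (mul_eq_right₀ hc).1 hφx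
  simpa using S.vadd_mem_of_mem_direction hd hp

end AffineSubspace

theorem Submodule.span_inter_preimage_singleton {U : Submodule K V} (φ : V →ₗ[K] K) {c : K}
    (hc : c ≠ 0) {q : V} (hq : q ∈ U) (hφq : φ q ≠ 0) :
    Submodule.span K ((U : Set V) ∩ φ ⁻¹' {c}) = U := by
  refine le_antisymm (Submodule.span_le.2 Set.inter_subset_left) fun u hu => ?_
  set p := (c / φ q) • q
  have hp : p ∈ (U : Set V) ∩ φ ⁻¹' {c} := ⟨U.smul_mem _ hq, by simp [p, hφq]⟩
  have hφp : φ p = c := hp.2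
  have hu' : u + (1 - φ u / c) • p ∈ (U : Set V) ∩ φ ⁻¹' {c} :=
    ⟨U.add_mem hu (U.smul_mem _ hp.1), by simp [hφp]; field_simp; ring⟩
  have : u = (u + (1 - φ u / c) • p) - (1 - φ u / c) • p := by abel
  rw [this]
  exact Submodule.sub_mem _ (Submodule.subset_span hu')
    (Submodule.smul_mem _ _ (Submodule.subset_span hp))

end Field

section Lift

variable {n : ℕ}

@[simp] theorem snocNegOne_last (x : Euc n) : snocNegOne x (Fin.last n) = -1 := by
  simp [snocNegOne]

@[simp] theorem snocNegOne_castSucc (x : Euc n) (i : Fin n) :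
    snocNegOne x i.castSucc = x i := by
  simp [snocNegOne]

def snocZero : Euc n →ₗ[ℝ] Euc (n + 1) where
  toFun x := (EuclideanSpace.equiv (Fin (n + 1)) ℝ).symm
    (Fin.snoc (EuclideanSpace.equiv (Fin n) ℝ x) 0)
  map_add' x y := by
    ext i
    induction i using Fin.lastCases <;> simp
  map_smul' c x := by
    ext i
    induction i using Fin.lastCases <;> simp

@[simp] theorem snocZero_last (x : Euc n) : snocZero x (Fin.last n) = 0 := by simp [snocZero]

@[simp] theorem snocZero_castSucc (x : Euc n) (i : Fin n) : snocZero x i.castSucc = x i := by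
  simp [snocZero]

def snocNegOneAffine : Euc n →ᵃ[ℝ] Euc (n + 1) where
  toFun := snocNegOne
  linear := snocZero
  map_vadd' x d := by
    ext i
    induction i using Fin.lastCases <;> simp

@[simp] theorem coe_snocNegOneAffine : ⇑(snocNegOneAffine (n := n)) = snocNegOne := rfl

@[simp] theorem snocNegOneAffine_linear : (snocNegOneAffine (n := n)).linear = snocZero := rfl

theorem snocNegOne_injective : Function.Injective (snocNegOne (n := n)) := by
  intro x y h
  ext i
  simpa using congrArg (· i.castSucc) h

theorem range_snocNegOne :
    Set.range (snocNegOne (n := n)) = EuclideanSpace.projₗ (Fin.last n) ⁻¹' {-1} := by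
  ext y
  refine ⟨by rintro ⟨x, rfl⟩; simp, fun hy => ?_⟩
  refine ⟨(EuclideanSpace.equiv (Fin n) ℝ).symm fun i => y i.castSucc, ?_⟩
  ext i
  induction i using Fin.lastCases with
  | last => simpa using hy.symm
  | cast i => simp

theorem snocZero_injective : Function.Injective (snocZero (n := n)) := by
  intro x y h
  ext i
  simpa using congrArg (· i.castSucc) h

theorem snocNegOne_ne_zero (x : Euc n) : snocNegOne x ≠ 0 := fun h => by
  simpa using congrArg (· (Fin.last n)) h

theorem snocNegOne_image_subset (A : Set (Euc n)) :
    snocNegOne '' A ⊆ EuclideanSpace.projₗ (Fin.last n) ⁻¹' {-1} :=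
  range_snocNegOne (n := n) ▸ Set.image_subset_range _ _

theorem finrank_span_snocNegOne_image {A : AffineSubspace ℝ (Euc n)}
    (hA : (A : Set (Euc n)).Nonempty) :
    finrank ℝ (Submodule.span ℝ (snocNegOne '' (A : Set (Euc n)))) =
      finrank ℝ A.direction + 1 := by
  obtain ⟨a, ha⟩ := hA
  have h := (A.map snocNegOneAffine).finrank_span_coe_of_subset_preimage
    (by simpa using snocNegOne_image_subset _) (by norm_num) (AffineSubspace.mem_map_of_mem _ ha)
  rwa [AffineSubspace.coe_map, AffineSubspace.map_direction, snocNegOneAffine_linear,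
    ← (Submodule.equivMapOfInjective _ snocZero_injective _).finrank_eq] at h

theorem snocNegOne_mem_span_image_iff {A : AffineSubspace ℝ (Euc n)}
    (hA : (A : Set (Euc n)).Nonempty) {x : Euc n} :
    snocNegOne x ∈ Submodule.span ℝ (snocNegOne '' (A : Set (Euc n))) ↔ x ∈ A := by
  refine ⟨fun hx => ?_, fun hx => Submodule.subset_span ⟨x, hx, rfl⟩⟩
  obtain ⟨a, ha⟩ := hA
  have h := (A.map snocNegOneAffine).mem_of_mem_span_of_subset_preimage
    (by simpa using snocNegOne_image_subset _) (by norm_num) (AffineSubspace.mem_map_of_mem _ ha)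
    (by simpa using hx) (by simp)
  rwa [← coe_snocNegOneAffine, AffineSubspace.mem_map_iff_mem_of_injective] at h
  exact snocNegOne_injective

theorem span_snocNegOne_image_eq_top_iff {A : AffineSubspace ℝ (Euc n)}
    (hA : (A : Set (Euc n)).Nonempty) :
    Submodule.span ℝ (snocNegOne '' (A : Set (Euc n))) = ⊤ ↔ A = ⊤ := by
  rw [← AffineSubspace.direction_eq_top_iff_of_nonempty hA,
    Submodule.eq_top_iff_finrank_eq, Submodule.eq_top_iff_finrank_eq,
    finrank_span_snocNegOne_image hA, finrank_euclideanSpace_fin, finrank_euclideanSpace_fin]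
  omega

theorem one_div_finrank_mul_wsum_span_snocNegOne_image {m : ℕ} (v : Fin m → Euc n)
    (w : Fin m → ℝ) {A : AffineSubspace ℝ (Euc n)} (hA : (A : Set (Euc n)).Nonempty) :
    (1 / (finrank ℝ (Submodule.span ℝ (snocNegOne '' (A : Set (Euc n)))) : ℝ)) *
        wsum w (fun k =>
          snocNegOne (v k) ∈ Submodule.span ℝ (snocNegOne '' (A : Set (Euc n)))) =
      (1 / ((finrank ℝ A.direction : ℝ) + 1)) * wsum w (fun k => v k ∈ A) := by
  simp only [finrank_span_snocNegOne_image hA, snocNegOne_mem_span_image_iff hA, Nat.cast_succ]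

theorem exists_affineSubspace_span_snocNegOne_image_eq {U : Submodule ℝ (Euc (n + 1))}
    (hU : U ≠ ⊤) {q : Euc (n + 1)} (hqU : q ∈ U) (hq : q (Fin.last n) ≠ 0) :
    ∃ A : AffineSubspace ℝ (Euc n),
      (A : Set (Euc n)).Nonempty ∧ (A : Set (Euc n)) ≠ Set.univ ∧
      Submodule.span ℝ (snocNegOne '' (A : Set (Euc n))) = U := by
  set A := U.toAffineSubspace.comap snocNegOneAffine
  have hspan : Submodule.span ℝ (snocNegOne '' (A : Set (Euc n))) = U := by
    rw [AffineSubspace.coe_comap, coe_snocNegOneAffine, Set.image_preimage_eq_inter_range,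
      range_snocNegOne]
    exact Submodule.span_inter_preimage_singleton _ (by norm_num) hqU hq
  have hA : (A : Set (Euc n)).Nonempty := by
    rw [Set.nonempty_iff_ne_empty]
    rintro hA
    rw [hA, Set.image_empty, Submodule.span_empty] at hspan
    rw [← hspan, Submodule.mem_bot] at hqU
    exact hq (by simp [hqU])
  refine ⟨A, hA, ?_, hspan⟩
  rw [Ne, AffineSubspace.coe_eq_univ_iff, ← span_snocNegOne_image_eq_top_iff hA, hspan]
  exact hU

theorem wsum_eq_zero_of_forall_not {m : ℕ} (w : Fin m → ℝ) {p : Fin m → Prop}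
    (hp : ∀ k, ¬ p k) : wsum w p = 0 := by
  simp [wsum, hp]

theorem wsum_eq_zero_of_sum_eq_zero {m : ℕ} {w : Fin m → ℝ} (hw : ∀ k, 0 ≤ w k)
    (h : ∑ k, w k = 0) (p : Fin m → Prop) : wsum w p = 0 := by
  classical
  have hw0 := (Finset.sum_eq_zero_iff_of_nonneg fun k _ => hw k).1 h
  exact Finset.sum_eq_zero fun k _ => hw0 k (Finset.mem_univ k)

theorem IsCompl.exists_equality_case_last_ne_zero {m : ℕ} {v : Fin m → Euc n}
    {w : Fin m → ℝ} (hw : ∀ k, 0 ≤ w k) {W W' : Submodule ℝ (Euc (n + 1))}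
    (hWW' : IsCompl W W') (hW : W ≠ ⊤) {p : Euc (n + 1)} (hpW : p ∈ W)
    (hp : p (Fin.last n) ≠ 0)
    (hW'eq : (1 / (finrank ℝ W' : ℝ)) * wsum w (fun k => snocNegOne (v k) ∈ W') =
      (1 / ((n : ℝ) + 1)) * ∑ k, w k) :
    ∃ U : Submodule ℝ (Euc (n + 1)), IsCompl W U ∧
      (1 / (finrank ℝ U : ℝ)) * wsum w (fun k => snocNegOne (v k) ∈ U) =
        (1 / ((n : ℝ) + 1)) * ∑ k, w k ∧ ∃ q ∈ U, q (Fin.last n) ≠ 0 := by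
  by_cases hW'last : ∃ q ∈ W', q (Fin.last n) ≠ 0
  · exact ⟨W', hWW', hW'eq, hW'last⟩
  simp only [not_exists, not_and, not_not] at hW'last
  have htotal : ∑ k, w k = 0 := by
    rw [wsum_eq_zero_of_forall_not w fun k hk => by simpa using hW'last _ hk, mul_zero,
      eq_comm, mul_eq_zero] at hW'eq
    exact hW'eq.resolve_left (by positivity)
  obtain ⟨U, hWU, hU⟩ :=
    hWW'.exists_isCompl_exists_apply_ne_zero hW (EuclideanSpace.projₗ (Fin.last n)) hpW hp
  exact ⟨U, hWU, by simp [wsum_eq_zero_of_sum_eq_zero hw htotal, htotal], hU⟩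

end Lift

theorem affine_equality_of_linear_equality_general
    {n m : ℕ} (v : Fin m → Euc n) (w : Fin m → ℝ) (hw : ∀ k, 0 < w k)
    (hyp_eq : ∀ W : Submodule ℝ (Euc (n + 1)), W ≠ ⊥ → W ≠ ⊤ →
      (1 / (Module.finrank ℝ W : ℝ)) * wsum w (fun k => snocNegOne (v k) ∈ W) =
        (1 / ((n : ℝ) + 1)) * ∑ k, w k →
      ∃ W' : Submodule ℝ (Euc (n + 1)), W' ≠ ⊤ ∧ W ⊓ W' = ⊥ ∧ W ⊔ W' = ⊤ ∧
        (1 / (Module.finrank ℝ W' : ℝ)) * wsum w (fun k => snocNegOne (v k) ∈ W') =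
          (1 / ((n : ℝ) + 1)) * ∑ k, w k) :
    ∀ A : AffineSubspace ℝ (Euc n),
      (A : Set (Euc n)).Nonempty → (A : Set (Euc n)) ≠ Set.univ →
      (1 / ((Module.finrank ℝ A.direction : ℝ) + 1)) * wsum w (fun k => v k ∈ A) =
        (1 / ((n : ℝ) + 1)) * ∑ k, w k →
      ∃ A' : AffineSubspace ℝ (Euc n),
        (A' : Set (Euc n)).Nonempty ∧ (A' : Set (Euc n)) ≠ Set.univ ∧
        Submodule.span ℝ (snocNegOne '' (A : Set (Euc n))) ⊓
            Submodule.span ℝ (snocNegOne '' (A' : Set (Euc n))) = ⊥ ∧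
        Submodule.span ℝ (snocNegOne '' (A : Set (Euc n))) ⊔
            Submodule.span ℝ (snocNegOne '' (A' : Set (Euc n))) = ⊤ ∧
        (1 / ((Module.finrank ℝ A'.direction : ℝ) + 1)) * wsum w (fun k => v k ∈ A') =
          (1 / ((n : ℝ) + 1)) * ∑ k, w k := by
  intro A hA hAuniv hAeq
  set W := Submodule.span ℝ (snocNegOne '' (A : Set (Euc n)))
  obtain ⟨a, ha⟩ := hA
  have haW : snocNegOne a ∈ W := Submodule.subset_span ⟨a, ha, rfl⟩
  have hWbot : W ≠ ⊥ := (Submodule.ne_bot_iff W).2 ⟨_, haW, snocNegOne_ne_zero a⟩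
  have hWtop : W ≠ ⊤ := by
    rwa [Ne, span_snocNegOne_image_eq_top_iff ⟨a, ha⟩, ← AffineSubspace.coe_eq_univ_iff]
  rw [← one_div_finrank_mul_wsum_span_snocNegOne_image v w ⟨a, ha⟩] at hAeq
  obtain ⟨W', -, hinf, hsup, hW'eq⟩ := hyp_eq W hWbot hWtop hAeq
  have hWW' : IsCompl W W' := ⟨disjoint_iff.2 hinf, codisjoint_iff.2 hsup⟩
  obtain ⟨U, hWU, hUeq, q, hqU, hq⟩ := hWW'.exists_equality_case_last_ne_zero
    (fun k => (hw k).le) hWtop haW (by simp) hW'eq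
  obtain ⟨A', hA', hA'univ, hspan⟩ := exists_affineSubspace_span_snocNegOne_image_eq
    (fun h => hWbot (eq_bot_of_isCompl_top (h ▸ hWU))) hqU hq
  refine ⟨A', hA', hA'univ, ?_, ?_, ?_⟩
  · rw [hspan]; exact hWU.inf_eq_bot
  · rw [hspan]; exact hWU.sup_eq_top
  · rw [← one_div_finrank_mul_wsum_span_snocNegOne_image v w hA', hspan, hUeq]

/-- If positive weights `w_k` attached to vectors `v_k ∈ ℝ^n` satisfy the linear subspace
concentration inequality in `ℝ^(n+1)` for the lifted vectors `(v_k, -1)`, with the property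
that any equality case admits a complementary equality case, then any equality case of the
affine subspace concentration inequality in `ℝ^n` admits a complementary proper affine
subspace which is again an equality case.  (Two affine subspaces `A, A'` of `ℝ^n` are
complementary when the linear spans of their images under `v ↦ (v,-1)` are complementary
linear subspaces of `ℝ^(n+1)`.) -/
theorem affine_equality_of_linear_equality
    {n m : ℕ} (hn : 1 ≤ n) (v : Fin m → Euc n) (w : Fin m → ℝ) (hw : ∀ k, 0 < w k)
    (hyp : ∀ W : Submodule ℝ (Euc (n + 1)), W ≠ ⊥ → W ≠ ⊤ →
      (1 / (Module.finrank ℝ W : ℝ)) * wsum w (fun k => snocNegOne (v k) ∈ W) ≤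
        (1 / ((n : ℝ) + 1)) * ∑ k, w k)
    (hyp_eq : ∀ W : Submodule ℝ (Euc (n + 1)), W ≠ ⊥ → W ≠ ⊤ →
      (1 / (Module.finrank ℝ W : ℝ)) * wsum w (fun k => snocNegOne (v k) ∈ W) =
        (1 / ((n : ℝ) + 1)) * ∑ k, w k →
      ∃ W' : Submodule ℝ (Euc (n + 1)), W' ≠ ⊤ ∧ W ⊓ W' = ⊥ ∧ W ⊔ W' = ⊤ ∧
        (1 / (Module.finrank ℝ W' : ℝ)) * wsum w (fun k => snocNegOne (v k) ∈ W') =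
          (1 / ((n : ℝ) + 1)) * ∑ k, w k) :
    ∀ A : AffineSubspace ℝ (Euc n),
      (A : Set (Euc n)).Nonempty → (A : Set (Euc n)) ≠ Set.univ →
      (1 / ((Module.finrank ℝ A.direction : ℝ) + 1)) * wsum w (fun k => v k ∈ A) =
        (1 / ((n : ℝ) + 1)) * ∑ k, w k →
      ∃ A' : AffineSubspace ℝ (Euc n),
        (A' : Set (Euc n)).Nonempty ∧ (A' : Set (Euc n)) ≠ Set.univ ∧
        Submodule.span ℝ (snocNegOne '' (A : Set (Euc n))) ⊓
            Submodule.span ℝ (snocNegOne '' (A' : Set (Euc n))) = ⊥ ∧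
        Submodule.span ℝ (snocNegOne '' (A : Set (Euc n))) ⊔
            Submodule.span ℝ (snocNegOne '' (A' : Set (Euc n))) = ⊤ ∧
        (1 / ((Module.finrank ℝ A'.direction : ℝ) + 1)) * wsum w (fun k => v k ∈ A') =
          (1 / ((n : ℝ) + 1)) * ∑ k, w k :=
  affine_equality_of_linear_equality_general v w hw hyp_eq
end
end

section
/- Let N ≥ 1, let e_1, …, e_m ∈ ℝ^N be vectors, regarded also as vectors of ℂ^N via the standard inclusion ℝ^N ⊆ ℂ^N, and let w_1, …, w_m > 0 be positive real weights. Suppose that (i) for every nonzero proper ℂ-linear subspace F ⊊ ℂ^N one has (1/dim_ℂ F) · Σ_{k : e_k ∈ F} w_k ≤ (1/N) · Σ_{k=1}^m w_k, and (ii) whenever equality holds in (i) for some F, there exists a ℂ-linear subspace F′ ⊊ ℂ^N complementary to F (i.e. F ∩ F′ = 0 and F + F′ = ℂ^N) for which equality also holds. Then, whenever (1/dim_ℝ W) · Σ_{k : e_k ∈ W} w_k = (1/N) · Σ_{k=1}^m w_k for some nonzero proper ℝ-linear subspace W ⊊ ℝ^N, there exists an ℝ-linear subspace W′ ⊊ ℝ^N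 complementary to W (i.e. W ∩ W′ = 0 and W + W′ = ℝ^N) for which equality also holds. -/
open MeasureTheory Module
open scoped RealInnerProductSpace

noncomputable section

/-!
The complexification `F` of `W` has the same dimension and contains the same vectors `e k`, so
it is a complex equality case and has a complementary equality case `F'`. The real points of `F'`
span a subspace `G ≤ F'` containing the same vectors `e k`, and `G ≠ 0` because an equality case
contains some nonzero `e k`. The bound for `G` then forces `dim G ≥ dim F'`, so `F'` is the
complexification of its real points `W'`, which therefore form a real complement of `W`
attaining equality.
-/

section Density

variable {K V : Type*} [Field K] [AddCommGroup V] [Module K V] {m : ℕ}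

def subspaceDensity (w : Fin m → ℝ) (v : Fin m → V) (G : Submodule K V) : ℝ :=
  (1 / (finrank K G : ℝ)) * wsum w (fun k => v k ∈ G)

lemma wsum_congr (w : Fin m → ℝ) {p q : Fin m → Prop} (h : ∀ k, p k ↔ q k) :
    wsum w p = wsum w q := by
  obtain rfl : p = q := funext fun k => propext (h k)
  rfl

lemma wsum_of_forall (w : Fin m → ℝ) {p : Fin m → Prop} (h : ∀ k, p k) :
    wsum w p = ∑ k, w k := by
  simp [wsum, h]

lemma wsum_add_le_wsum {w : Fin m → ℝ} (hw : ∀ k, 0 ≤ w k) {p q : Fin m → Prop} {k₀ : Fin m}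
    (hpq : ∀ k, p k → q k) (hp : ¬p k₀) (hq : q k₀) : wsum w p + w k₀ ≤ wsum w q := by
  unfold wsum
  rw [add_comm, ← Finset.sum_insert (by simp [hp])]
  refine Finset.sum_le_sum_of_subset_of_nonneg ?_ fun k _ _ => hw k
  intro k hk
  simp only [Finset.mem_insert, Finset.mem_filter, Finset.mem_univ, true_and] at hk ⊢
  rcases hk with rfl | hk
  exacts [hq, hpq k hk]

variable [FiniteDimensional K V] {w : Fin m → ℝ} {v : Fin m → V}

-- Otherwise a line through a nonzero `v k` would exceed the bound, and if all `v k` vanish,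
-- `G` would have full dimension.
lemma exists_ne_zero_mem_of_subspaceDensity_eq (hw : ∀ k, 0 < w k) (hT : 0 < ∑ k, w k)
    (hyp : ∀ G : Submodule K V, G ≠ ⊥ → G ≠ ⊤ →
      subspaceDensity w v G ≤ (1 / (finrank K V : ℝ)) * ∑ k, w k)
    {G : Submodule K V} (hbot : G ≠ ⊥) (htop : G ≠ ⊤)
    (hG : subspaceDensity w v G = (1 / (finrank K V : ℝ)) * ∑ k, w k) :
    ∃ k, v k ≠ 0 ∧ v k ∈ G := by
  by_contra! hzero
  set A := (1 / (finrank K V : ℝ)) * ∑ k, w k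
  have hdG : 0 < finrank K G := Nat.pos_of_ne_zero (Submodule.finrank_eq_zero.not.2 hbot)
  have hdV : finrank K G < finrank K V := Submodule.finrank_lt htop
  have hA : 0 < A := mul_pos (by simp only [one_div, inv_pos, Nat.cast_pos]; omega) hT
  have hwsum : wsum w (fun k => v k ∈ G) = finrank K G * A := by
    rw [← hG, subspaceDensity]; field_simp
  by_cases hall : ∀ k, v k = 0
  · have hT' : ∑ k, w k = finrank K G * A := by
      rw [← hwsum, wsum_of_forall w fun k => hall k ▸ G.zero_mem]
    have hV : (0 : ℝ) < finrank K V := by exact_mod_cast hdG.trans hdV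
    have : (finrank K G : ℝ) = finrank K V := by
      simp only [A] at hT'
      field_simp at hT'
      linarith
    exact absurd (by exact_mod_cast this) hdV.ne
  push Not at hall
  obtain ⟨k₀, hk₀⟩ := hall
  have hL : finrank K (K ∙ v k₀) = 1 := finrank_span_singleton hk₀
  have hLbot : (K ∙ v k₀) ≠ ⊥ := by simp [hk₀]
  have hLtop : (K ∙ v k₀) ≠ ⊤ := fun h => by
    rw [h, finrank_top] at hL
    omega
  have hle := hyp _ hLbot hLtop
  rw [subspaceDensity, hL, Nat.cast_one, div_one, one_mul] at hle
  have hadd : wsum w (fun k => v k ∈ G) + w k₀ ≤ wsum w (fun k => v k ∈ K ∙ v k₀) :=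
    wsum_add_le_wsum (fun k => (hw k).le)
      (fun k hk => by
        rw [show v k = 0 from by_contra fun h0 => hzero k h0 hk]
        exact Submodule.zero_mem _)
      (fun h => hzero k₀ hk₀ h) (Submodule.mem_span_singleton_self _)
  have : A ≤ finrank K G * A := le_mul_of_one_le_left hA.le (by exact_mod_cast hdG)
  linarith [hw k₀]

lemma eq_of_le_of_subspaceDensity_eq (hT : 0 < ∑ k, w k)
    (hyp : ∀ G : Submodule K V, G ≠ ⊥ → G ≠ ⊤ →
      subspaceDensity w v G ≤ (1 / (finrank K V : ℝ)) * ∑ k, w k)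
    {F G : Submodule K V} (hF : subspaceDensity w v F = (1 / (finrank K V : ℝ)) * ∑ k, w k)
    (hGF : G ≤ F) (hbot : G ≠ ⊥) (htop : F ≠ ⊤) (hmem : ∀ k, v k ∈ F → v k ∈ G) : G = F := by
  have hdG : 0 < finrank K G := Nat.pos_of_ne_zero (Submodule.finrank_eq_zero.not.2 hbot)
  have hdF : 0 < finrank K F := hdG.trans_le (Submodule.finrank_mono hGF)
  have hdV : 0 < finrank K V := hdG.trans_le (Submodule.finrank_le G)
  have hs : 0 < wsum w (fun k => v k ∈ F) := by
    have hA : 0 < (1 / (finrank K V : ℝ)) * ∑ k, w k := by positivity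
    rw [← hF, subspaceDensity] at hA
    exact pos_of_mul_pos_right hA (by positivity)
  have hle := hyp G hbot (ne_top_of_le_ne_top htop hGF)
  rw [← hF, subspaceDensity, subspaceDensity, wsum_congr w fun k => ⟨fun h => hGF h, hmem k⟩,
    one_div_mul_eq_div, one_div_mul_eq_div,
    div_le_div_iff_of_pos_left hs (by positivity) (by positivity)] at hle
  exact Submodule.eq_of_le_of_finrank_le hGF (by exact_mod_cast hle)

end Density

section Complexification

variable {N : ℕ}

@[simp] lemma complexify_apply (x : EuclideanSpace ℝ (Fin N)) (i : Fin N) :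
    complexify x i = (x i : ℂ) := rfl

def reVec (x : EuclideanSpace ℂ (Fin N)) : EuclideanSpace ℝ (Fin N) :=
  WithLp.toLp 2 fun i => (x i).re

def imVec (x : EuclideanSpace ℂ (Fin N)) : EuclideanSpace ℝ (Fin N) :=
  WithLp.toLp 2 fun i => (x i).im

@[simp] lemma reVec_apply (x : EuclideanSpace ℂ (Fin N)) (i : Fin N) : reVec x i = (x i).re := rfl

@[simp] lemma imVec_apply (x : EuclideanSpace ℂ (Fin N)) (i : Fin N) : imVec x i = (x i).im := rfl

lemma reVec_add (x y : EuclideanSpace ℂ (Fin N)) : reVec (x + y) = reVec x + reVec y := by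
  ext i; simp

lemma imVec_add (x y : EuclideanSpace ℂ (Fin N)) : imVec (x + y) = imVec x + imVec y := by
  ext i; simp

lemma reVec_smul (c : ℂ) (x : EuclideanSpace ℂ (Fin N)) :
    reVec (c • x) = c.re • reVec x - c.im • imVec x := by
  ext i; simp

lemma imVec_smul (c : ℂ) (x : EuclideanSpace ℂ (Fin N)) :
    imVec (c • x) = c.re • imVec x + c.im • reVec x := by
  ext i; simp

@[simp] lemma reVec_complexify (v : EuclideanSpace ℝ (Fin N)) : reVec (complexify v) = v := by
  ext i; simp

@[simp] lemma imVec_complexify (v : EuclideanSpace ℝ (Fin N)) : imVec (complexify v) = 0 := by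
  ext i; simp

lemma complexify_reVec_add_I_smul (x : EuclideanSpace ℂ (Fin N)) :
    complexify (reVec x) + Complex.I • complexify (imVec x) = x := by
  ext i; simp [Complex.ext_iff]

lemma reVec_complexify_add_I_smul (u v : EuclideanSpace ℝ (Fin N)) :
    reVec (complexify u + Complex.I • complexify v) = u := by
  ext i; simp

lemma imVec_complexify_add_I_smul (u v : EuclideanSpace ℝ (Fin N)) :
    imVec (complexify u + Complex.I • complexify v) = v := by
  ext i; simp

lemma complexify_injective : Function.Injective (complexify (N := N)) :=
  Function.LeftInverse.injective reVec_complexify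

@[simp] lemma complexify_eq_zero {v : EuclideanSpace ℝ (Fin N)} : complexify v = 0 ↔ v = 0 :=
  complexify_injective.eq_iff' (by ext; simp)

def complexifyLinearMap : EuclideanSpace ℝ (Fin N) →ₗ[ℝ] EuclideanSpace ℂ (Fin N) where
  toFun := complexify
  map_add' x y := by ext i; simp
  map_smul' r x := by ext i; simp

def complexification (U : Submodule ℝ (EuclideanSpace ℝ (Fin N))) :
    Submodule ℂ (EuclideanSpace ℂ (Fin N)) where
  carrier := {x | reVec x ∈ U ∧ imVec x ∈ U}
  add_mem' {x y} hx hy := by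
    rw [Set.mem_ofPred_eq, reVec_add, imVec_add]
    exact ⟨U.add_mem hx.1 hy.1, U.add_mem hx.2 hy.2⟩
  zero_mem' := ⟨by convert U.zero_mem; ext; simp, by convert U.zero_mem; ext; simp⟩
  smul_mem' c x hx := by
    rw [Set.mem_ofPred_eq, reVec_smul, imVec_smul]
    exact ⟨U.sub_mem (U.smul_mem _ hx.1) (U.smul_mem _ hx.2),
      U.add_mem (U.smul_mem _ hx.2) (U.smul_mem _ hx.1)⟩

variable {U U' : Submodule ℝ (EuclideanSpace ℝ (Fin N))}

lemma mem_complexification {x : EuclideanSpace ℂ (Fin N)} :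
    x ∈ complexification U ↔ reVec x ∈ U ∧ imVec x ∈ U := Iff.rfl

lemma complexify_mem_complexification {v : EuclideanSpace ℝ (Fin N)} :
    complexify v ∈ complexification U ↔ v ∈ U := by
  simp [mem_complexification, U.zero_mem]

def complexificationEquivProd (U : Submodule ℝ (EuclideanSpace ℝ (Fin N))) :
    (complexification U).restrictScalars ℝ ≃ₗ[ℝ] U × U where
  toFun x := (⟨reVec x, x.2.1⟩, ⟨imVec x, x.2.2⟩)
  invFun p := ⟨complexify p.1 + Complex.I • complexify p.2, by
    rw [Submodule.restrictScalars_mem, mem_complexification, reVec_complexify_add_I_smul,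
      imVec_complexify_add_I_smul]
    exact ⟨p.1.2, p.2.2⟩⟩
  map_add' x y := by ext <;> simp
  map_smul' r x := by ext <;> simp
  left_inv x := Subtype.ext <| complexify_reVec_add_I_smul (x : EuclideanSpace ℂ (Fin N))
  right_inv p := by ext <;> simp

lemma finrank_complexification (U : Submodule ℝ (EuclideanSpace ℝ (Fin N))) :
    finrank ℂ (complexification U) = finrank ℝ U := by
  have h := (complexificationEquivProd U).finrank_eq
  have h2 : finrank ℝ ((complexification U).restrictScalars ℝ) =
      2 * finrank ℂ (complexification U) := finrank_real_of_complex _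
  rw [Module.finrank_prod] at h
  omega

lemma isCompl_of_isCompl_complexification
    (h : IsCompl (complexification U) (complexification U')) : IsCompl U U' := by
  constructor
  · refine Submodule.disjoint_def.2 fun v hv hv' => complexify_eq_zero.1 ?_
    exact Submodule.disjoint_def.1 h.disjoint _ (complexify_mem_complexification.2 hv)
      (complexify_mem_complexification.2 hv')
  · refine codisjoint_iff.2 (eq_top_iff.2 fun v _ => ?_)
    obtain ⟨y, hy, z, hz, hyz⟩ :=
      Submodule.mem_sup.1 (h.sup_eq_top ▸ Submodule.mem_top : complexify v ∈ _)
    rw [← reVec_complexify v, ← hyz, reVec_add]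
    exact Submodule.add_mem_sup hy.1 hz.1

def realPoints (F : Submodule ℂ (EuclideanSpace ℂ (Fin N))) :
    Submodule ℝ (EuclideanSpace ℝ (Fin N)) :=
  (F.restrictScalars ℝ).comap complexifyLinearMap

lemma mem_realPoints {F : Submodule ℂ (EuclideanSpace ℂ (Fin N))}
    {v : EuclideanSpace ℝ (Fin N)} :
    v ∈ realPoints F ↔ complexify v ∈ F := Iff.rfl

lemma complexification_realPoints_le (F : Submodule ℂ (EuclideanSpace ℂ (Fin N))) :
    complexification (realPoints F) ≤ F := fun x hx => by
  rw [← complexify_reVec_add_I_smul x]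
  exact F.add_mem hx.1 (F.smul_mem _ hx.2)

lemma subspaceDensity_complexification {m : ℕ} (w : Fin m → ℝ)
    (e : Fin m → EuclideanSpace ℝ (Fin N)) (U : Submodule ℝ (EuclideanSpace ℝ (Fin N))) :
    subspaceDensity w (complexify ∘ e) (complexification U) = subspaceDensity w e U := by
  simp only [subspaceDensity, Function.comp_apply, finrank_complexification,
    complexify_mem_complexification]

end Complexification

lemma complexification_realPoints_of_subspaceDensity_eq {N m : ℕ}
    {e : Fin m → EuclideanSpace ℝ (Fin N)} {w : Fin m → ℝ} (hw : ∀ k, 0 < w k)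
    (hT : 0 < ∑ k, w k)
    (hyp : ∀ G : Submodule ℂ (EuclideanSpace ℂ (Fin N)), G ≠ ⊥ → G ≠ ⊤ →
      subspaceDensity w (complexify ∘ e) G ≤ (1 / (N : ℝ)) * ∑ k, w k)
    {F : Submodule ℂ (EuclideanSpace ℂ (Fin N))} (hbot : F ≠ ⊥) (htop : F ≠ ⊤)
    (hF : subspaceDensity w (complexify ∘ e) F = (1 / (N : ℝ)) * ∑ k, w k) :
    complexification (realPoints F) = F := by
  have hN : (N : ℝ) = finrank ℂ (EuclideanSpace ℂ (Fin N)) := by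
    rw [finrank_euclideanSpace_fin]
  rw [hN] at hyp hF
  obtain ⟨k, hk0, hkF⟩ := exists_ne_zero_mem_of_subspaceDensity_eq hw hT hyp hbot htop hF
  refine eq_of_le_of_subspaceDensity_eq hT hyp hF (complexification_realPoints_le F) ?_ htop
    fun k hk => complexify_mem_complexification.2 (mem_realPoints.2 hk)
  exact fun h => hk0 <| (Submodule.mem_bot ℂ).1 <|
    h ▸ complexify_mem_complexification.2 (mem_realPoints.2 hkF)

theorem real_equality_of_complex_equality_general
    {N m : ℕ} (e : Fin m → EuclideanSpace ℝ (Fin N))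
    (w : Fin m → ℝ) (hw : ∀ k, 0 < w k)
    (hyp : ∀ F : Submodule ℂ (EuclideanSpace ℂ (Fin N)), F ≠ ⊥ → F ≠ ⊤ →
      (1 / (Module.finrank ℂ F : ℝ)) * wsum w (fun k => complexify (e k) ∈ F) ≤
        (1 / (N : ℝ)) * ∑ k, w k)
    (hyp_eq : ∀ F : Submodule ℂ (EuclideanSpace ℂ (Fin N)), F ≠ ⊥ → F ≠ ⊤ →
      (1 / (Module.finrank ℂ F : ℝ)) * wsum w (fun k => complexify (e k) ∈ F) =
        (1 / (N : ℝ)) * ∑ k, w k →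
      ∃ F' : Submodule ℂ (EuclideanSpace ℂ (Fin N)), F' ≠ ⊤ ∧ F ⊓ F' = ⊥ ∧ F ⊔ F' = ⊤ ∧
        (1 / (Module.finrank ℂ F' : ℝ)) * wsum w (fun k => complexify (e k) ∈ F') =
          (1 / (N : ℝ)) * ∑ k, w k) :
    ∀ W : Submodule ℝ (EuclideanSpace ℝ (Fin N)), W ≠ ⊥ → W ≠ ⊤ →
      (1 / (Module.finrank ℝ W : ℝ)) * wsum w (fun k => e k ∈ W) =
        (1 / (N : ℝ)) * ∑ k, w k →
      ∃ W' : Submodule ℝ (EuclideanSpace ℝ (Fin N)), W' ≠ ⊤ ∧ W ⊓ W' = ⊥ ∧ W ⊔ W' = ⊤ ∧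
        (1 / (Module.finrank ℝ W' : ℝ)) * wsum w (fun k => e k ∈ W') =
          (1 / (N : ℝ)) * ∑ k, w k := by
  intro W hWbot hWtop hW
  rcases Nat.eq_zero_or_pos m with rfl | hm
  · obtain ⟨W', hW'⟩ := Submodule.exists_isCompl W
    exact ⟨W', fun h => hWbot (eq_bot_of_isCompl_top (h ▸ hW')), hW'.inf_eq_bot,
      hW'.sup_eq_top, by simp [wsum]⟩
  have hT : 0 < ∑ k, w k := Finset.sum_pos (fun k _ => hw k) ⟨⟨0, hm⟩, Finset.mem_univ _⟩
  have hFbot : complexification W ≠ ⊥ := by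
    rwa [Ne, ← Submodule.finrank_eq_zero, finrank_complexification, Submodule.finrank_eq_zero]
  have hFtop : complexification W ≠ ⊤ := fun h => hWtop <| eq_top_iff.2 fun v _ =>
    complexify_mem_complexification.1 (h ▸ Submodule.mem_top)
  obtain ⟨F', hF'top, hinf, hsup, hF'⟩ :=
    hyp_eq _ hFbot hFtop ((subspaceDensity_complexification w e W).trans hW)
  have hF'bot : F' ≠ ⊥ := fun h => hFtop (by rwa [h, sup_bot_eq] at hsup)
  have hF'real := complexification_realPoints_of_subspaceDensity_eq hw hT hyp hF'bot hF'top hF'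
  have hWW' : IsCompl W (realPoints F') := isCompl_of_isCompl_complexification <| by
    rw [hF'real]
    exact ⟨disjoint_iff.2 hinf, codisjoint_iff.2 hsup⟩
  refine ⟨realPoints F', fun h => hWbot (eq_bot_of_isCompl_top (h ▸ hWW')), hWW'.inf_eq_bot,
    hWW'.sup_eq_top, ?_⟩
  exact (subspaceDensity_complexification w e _).symm.trans (by rw [hF'real]; exact hF')

/-- If positive weights `w_k` attached to real vectors `e_k ∈ ℝ^N ⊆ ℂ^N` satisfy the
subspace concentration inequality for all nonzero proper `ℂ`-linear subspaces of `ℂ^N`,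
with the property that any equality case admits a complementary equality case, then any
nonzero proper `ℝ`-linear subspace `W ⊊ ℝ^N` attaining equality admits a complementary
`ℝ`-linear subspace `W' ⊊ ℝ^N` (i.e. `W ⊓ W' = ⊥` and `W ⊔ W' = ⊤`) attaining equality. -/
theorem real_equality_of_complex_equality
    {N m : ℕ} (hN : 1 ≤ N) (e : Fin m → EuclideanSpace ℝ (Fin N))
    (w : Fin m → ℝ) (hw : ∀ k, 0 < w k)
    (hyp : ∀ F : Submodule ℂ (EuclideanSpace ℂ (Fin N)), F ≠ ⊥ → F ≠ ⊤ →
      (1 / (Module.finrank ℂ F : ℝ)) * wsum w (fun k => complexify (e k) ∈ F) ≤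
        (1 / (N : ℝ)) * ∑ k, w k)
    (hyp_eq : ∀ F : Submodule ℂ (EuclideanSpace ℂ (Fin N)), F ≠ ⊥ → F ≠ ⊤ →
      (1 / (Module.finrank ℂ F : ℝ)) * wsum w (fun k => complexify (e k) ∈ F) =
        (1 / (N : ℝ)) * ∑ k, w k →
      ∃ F' : Submodule ℂ (EuclideanSpace ℂ (Fin N)), F' ≠ ⊤ ∧ F ⊓ F' = ⊥ ∧ F ⊔ F' = ⊤ ∧
        (1 / (Module.finrank ℂ F' : ℝ)) * wsum w (fun k => complexify (e k) ∈ F') =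
          (1 / (N : ℝ)) * ∑ k, w k) :
    ∀ W : Submodule ℝ (EuclideanSpace ℝ (Fin N)), W ≠ ⊥ → W ≠ ⊤ →
      (1 / (Module.finrank ℝ W : ℝ)) * wsum w (fun k => e k ∈ W) =
        (1 / (N : ℝ)) * ∑ k, w k →
      ∃ W' : Submodule ℝ (EuclideanSpace ℝ (Fin N)), W' ≠ ⊤ ∧ W ⊓ W' = ⊥ ∧ W ⊔ W' = ⊤ ∧
        (1 / (Module.finrank ℝ W' : ℝ)) * wsum w (fun k => e k ∈ W') =
          (1 / (N : ℝ)) * ∑ k, w k :=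
  real_equality_of_complex_equality_general e w hw hyp hyp_eq
end
end

section
/- Let P ⊆ ℝ² be a reflexive lattice triangle, i.e. a full-dimensional reflexive lattice polytope with exactly three facets (sides) P_1, P_2, P_3, with primitive inner normals v_1, v_2, v_3 ∈ ℤ² and side lattice lengths ℓ_1, ℓ_2, ℓ_3. Then P satisfies the affine subspace concentration conditions — that is, for every proper affine subspace A ⊊ ℝ² one has (1/(dim A + 1)) · Σ_{k : v_k ∈ A} ℓ_k ≤ (1/3) · (ℓ_1 + ℓ_2 + ℓ_3) — if and only if ℓ_1 = ℓ_2 = ℓ_3. -/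
open MeasureTheory Module
open scoped RealInnerProductSpace

noncomputable section

/-!
The inner normals of a bounded polyhedron cannot all lie on one side of a
hyperplane through the origin, so they lie in no proper affine subspace. For a triangle this
means a line contains at most two normals and a point at most one, so equal side lengths satisfy
every condition. Conversely, the condition for the point `{v_i}` reads `ℓ_i ≤ (ℓ_1 + ℓ_2 + ℓ_3)/3`,
and these three inequalities force `ℓ_1 = ℓ_2 = ℓ_3`.
-/

theorem AffineSubspace.finrank_direction_pos {k V P : Type*} [Field k] [AddCommGroup V]
    [Module k V] [FiniteDimensional k V] [AddTorsor V P] {A : AffineSubspace k P}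
    {p q : P} (hp : p ∈ A) (hq : q ∈ A) (hpq : p ≠ q) :
    0 < finrank k A.direction :=
  Module.finrank_pos_iff_exists_ne_zero.mpr
    ⟨⟨p -ᵥ q, A.vsub_mem_direction hp hq⟩, by simpa using vsub_ne_zero.mpr hpq⟩

section wsum

variable {m : ℕ}

open Classical in
theorem wsum_const (a : ℝ) (p : Fin m → Prop) :
    wsum (fun _ => a) p = (Finset.univ.filter p).card * a := by
  simp only [wsum, Finset.sum_const, nsmul_eq_mul]

theorem wsum_eq_self (w : Fin m → ℝ) (i : Fin m) : wsum w (· = i) = w i := by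
  rw [wsum, Finset.sum_filter]
  convert Finset.sum_ite_eq' Finset.univ i w using 2 <;> simp

end wsum

namespace LatticePolytope

variable {n m : ℕ} (Q : LatticePolytope n m)

theorem IsLatticeLength.nonneg {k : Fin m} {ℓ : ℝ} (h : Q.IsLatticeLength k ℓ) : 0 ≤ ℓ := by
  obtain ⟨d, -, -, rfl⟩ := h
  positivity

theorem isBounded : Bornology.IsBounded Q.P := by
  obtain ⟨S, -, hPS⟩ := Q.isPolytope
  rw [hPS]
  exact (S.finite_toSet.isCompact_convexHull (𝕜 := ℝ)).isBounded

/-- Otherwise `P` would contain the ray from any of its points in direction `w`. -/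
theorem exists_inner_normal_neg {w : Euc n} (hw : w ≠ 0) : ∃ k, ⟪w, Q.v k⟫ < 0 := by
  by_contra! hnonneg
  obtain ⟨x₀, hx₀⟩ := Q.fullDim
  have hx₀P : x₀ ∈ Q.P := interior_subset hx₀
  have hray : ∀ t : ℝ, 0 ≤ t → x₀ + t • w ∈ Q.P := by
    intro t ht
    have hx := hx₀P
    rw [Q.halfspaces] at hx ⊢
    intro k
    have := mul_nonneg ht (hnonneg k)
    rw [inner_add_left, real_inner_smul_left]
    linarith [hx k]
  obtain ⟨C, hC⟩ := Metric.isBounded_iff.mp Q.isBounded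
  have hwpos : 0 < ‖w‖ := norm_pos_iff.mpr hw
  set t := (|C| + 1) / ‖w‖
  have ht : 0 ≤ t := by positivity
  have hdist : dist (x₀ + t • w) x₀ = |C| + 1 := by
    rw [dist_eq_norm, add_sub_cancel_left, norm_smul, Real.norm_of_nonneg ht,
      div_mul_cancel₀ _ hwpos.ne']
  linarith [hC (hray t ht) hx₀P, le_abs_self C]

theorem exists_normal_not_mem {A : AffineSubspace ℝ (Euc n)} (hA : A.direction ≠ ⊤) :
    ∃ k, Q.v k ∉ A := by
  by_contra! hmem
  obtain ⟨u, hu, hu0⟩ := Submodule.ne_bot_iff _ |>.mp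
    (Submodule.orthogonal_eq_bot_iff.not.mpr hA)
  obtain ⟨c, hc⟩ : ∃ c : ℝ, ∀ k, ⟪u, Q.v k⟫ = c := by
    rcases (A : Set (Euc n)).eq_empty_or_nonempty with hA₀ | ⟨p, hp⟩
    · exact ⟨0, fun k => absurd (hmem k) (by simp [← SetLike.mem_coe, hA₀])⟩
    · refine ⟨⟪u, p⟫, fun k => ?_⟩
      have := Submodule.inner_right_of_mem_orthogonal (A.vsub_mem_direction (hmem k) hp) hu
      rwa [vsub_eq_sub, inner_sub_left, real_inner_comm, real_inner_comm u p, sub_eq_zero] at this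
  rcases le_total 0 c with hc₀ | hc₀
  · obtain ⟨k, hk⟩ := Q.exists_inner_normal_neg hu0
    linarith [hc k]
  · obtain ⟨k, hk⟩ := Q.exists_inner_normal_neg (neg_ne_zero.mpr hu0)
    rw [inner_neg_left, hc k] at hk
    linarith

open Classical in
theorem card_normals_mem_le_finrank_succ (Q : LatticePolytope n 3)
    {A : AffineSubspace ℝ (Euc n)} (hA : A.direction ≠ ⊤) :
    (Finset.univ.filter fun k => Q.v k ∈ A).card ≤ finrank ℝ A.direction + 1 := by
  set s := Finset.univ.filter fun k => Q.v k ∈ A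
  have hs : s.card < 3 := by
    obtain ⟨k, hk⟩ := Q.exists_normal_not_mem hA
    simpa using Finset.card_lt_card (Finset.filter_ssubset.mpr ⟨k, Finset.mem_univ k, hk⟩)
  by_cases htwo : 1 < s.card
  · obtain ⟨i, hi, j, hj, hij⟩ := Finset.one_lt_card.mp htwo
    have := AffineSubspace.finrank_direction_pos (Finset.mem_filter.mp hi).2
      (Finset.mem_filter.mp hj).2 (Q.v_injective.ne hij)
    omega
  · omega

end LatticePolytope

theorem reflexive_triangle_concentration_iff_equal_lengths_general
    (Q : LatticePolytope 2 3)
    (ℓ : Fin 3 → ℝ) (hℓ : ∀ k, Q.IsLatticeLength k (ℓ k)) :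
    (∀ A : AffineSubspace ℝ (Euc 2),
        (A : Set (Euc 2)).Nonempty → (A : Set (Euc 2)) ≠ Set.univ →
        (1 / ((Module.finrank ℝ A.direction : ℝ) + 1)) * wsum ℓ (fun k => Q.v k ∈ A) ≤
          (1 / 3) * (ℓ 0 + ℓ 1 + ℓ 2)) ↔
      (ℓ 0 = ℓ 1 ∧ ℓ 1 = ℓ 2) := by
  classical
  constructor
  · intro hcond
    have hpoint : ∀ i, ℓ i ≤ (ℓ 0 + ℓ 1 + ℓ 2) / 3 := by
      intro i
      have hpred : (fun k => Q.v k ∈ affineSpan ℝ {Q.v i}) = (· = i) := by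
        ext k
        rw [AffineSubspace.mem_affineSpan_singleton, Q.v_injective.eq_iff]
      have := hcond (affineSpan ℝ {Q.v i}) (by simp)
        (by simp [Set.singleton_ne_univ])
      rwa [hpred, wsum_eq_self, direction_affineSpan, vectorSpan_singleton, finrank_bot,
        Nat.cast_zero, zero_add, div_one, one_mul, one_div_mul_eq_div] at this
    constructor <;> linarith [hpoint 0, hpoint 1, hpoint 2]
  · rintro ⟨h01, h12⟩ A hAne hAuniv
    have hℓ₀ : 0 ≤ ℓ 0 := (hℓ 0).nonneg
    have hconst : ℓ = fun _ => ℓ 0 := by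
      ext k
      fin_cases k <;> simp [h01, h12]
    have hdir : A.direction ≠ ⊤ := fun h =>
      hAuniv (by rw [(AffineSubspace.direction_eq_top_iff_of_nonempty hAne).mp h]; rfl)
    have hcard : ((Finset.univ.filter fun k => Q.v k ∈ A).card : ℝ) ≤
        (finrank ℝ A.direction : ℝ) + 1 := by
      exact_mod_cast Q.card_normals_mem_le_finrank_succ hdir
    rw [hconst, wsum_const]
    calc 1 / ((finrank ℝ A.direction : ℝ) + 1) *
          ((Finset.univ.filter fun k => Q.v k ∈ A).card * ℓ 0)
        ≤ 1 / ((finrank ℝ A.direction : ℝ) + 1) * (((finrank ℝ A.direction : ℝ) + 1) * ℓ 0) := by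
          gcongr
      _ = 1 / 3 * (ℓ 0 + ℓ 0 + ℓ 0) := by field_simp; ring

/-- A reflexive lattice triangle `P ⊆ ℝ²` with sides `P_1, P_2, P_3`, primitive inner
normals `v_k` and side lattice lengths `ℓ_k` satisfies the affine subspace concentration
conditions (for every proper affine subspace `A ⊊ ℝ²`,
`(1/(dim A + 1)) ∑_{k : v_k ∈ A} ℓ_k ≤ (1/3)(ℓ_1 + ℓ_2 + ℓ_3)`) if and only if all three
sides have the same lattice length. -/
theorem reflexive_triangle_concentration_iff_equal_lengths
    (Q : LatticePolytope 2 3) (hrefl : Q.Reflexive)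
    (ℓ : Fin 3 → ℝ) (hℓ : ∀ k, Q.IsLatticeLength k (ℓ k)) :
    (∀ A : AffineSubspace ℝ (Euc 2),
        (A : Set (Euc 2)).Nonempty → (A : Set (Euc 2)) ≠ Set.univ →
        (1 / ((Module.finrank ℝ A.direction : ℝ) + 1)) * wsum ℓ (fun k => Q.v k ∈ A) ≤
          (1 / 3) * (ℓ 0 + ℓ 1 + ℓ 2)) ↔
      (ℓ 0 = ℓ 1 ∧ ℓ 1 = ℓ 2) :=
  reflexive_triangle_concentration_iff_equal_lengths_general Q ℓ hℓ
end
end
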